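/- The density u_α(y) = (σ/√y)·φ(√y·μ/σ) + ((μ − ασ²)/2)·e^{αy(ασ²/2 − μ)}·erfc(√y·(ασ² − μ)/√(2σ²)), where φ is the standard normal density, satisfies ∫₀^∞ e^{−βy} u_α(y) dy = σ²/(ασ² + √(2βσ²+μ²) − μ) for all β ≥ 0, when 0 ≤ α < 2μ/σ². -/

import Mathlib

/-!
Multiplied by `exp (-β y)`, the density splits into `σ / √(2π) · exp (-t y) / √y` with
`t = β + μ² / (2σ²)` and `(μ - ασ²) / 2 · exp (-s y) erfc (c √y)` with `s = β + αμ - α²σ² / 2`,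
`c = (ασ² - μ) / √(2σ²)`. The first Laplace transform is the Gamma integral `√π / √t`. For the
second, `-exp (-s y) erfc (c √y) / s` differentiates to `exp (-s y) erfc (c √y)` plus a multiple of
`exp (-(s + c²) y) / √y`, which gives `(1 - c / √(s + c²)) / s`; here `s + c² = t`. With
`Δ = √(2βσ² + μ²)` the factorisation `(ασ² + Δ - μ)(Δ + μ - ασ²) = 2σ² s` collapses the sum to the
closed form. Since `ασ² < 2μ`, `s > 0` unless `α = β = 0`; then `u₀ ≥ μ / 2` is not integrable on
`(0, ∞)`, and both sides are `0` (Bochner integral of a non-integrable function, division by `0`).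
-/

open MeasureTheory Real Set

/-- standard normal density -/
noncomputable def stdNormal (z : ℝ) : ℝ := (1 / Real.sqrt (2 * Real.pi)) * Real.exp (-z ^ 2 / 2)

/-- complementary error function -/
noncomputable def erfc (x : ℝ) : ℝ := (2 / Real.sqrt Real.pi) * ∫ u in Set.Ioi x, Real.exp (-u ^ 2)

/-- the resolvent density `u_α`. -/
noncomputable def uResolvent (μ σ α y : ℝ) : ℝ :=
  (σ / Real.sqrt y) * stdNormal (Real.sqrt y * μ / σ) +
    ((μ - α * σ ^ 2) / 2) * Real.exp (α * y * (α * σ ^ 2 / 2 - μ)) *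
      erfc (Real.sqrt y * (α * σ ^ 2 - μ) / Real.sqrt (2 * σ ^ 2))

open Filter Topology

theorem hasDerivAt_integral_Ioi {E : Type*} [NormedAddCommGroup E] [NormedSpace ℝ E]
    [CompleteSpace E] {f : ℝ → E} (hf : Integrable f) (hc : Continuous f) (x : ℝ) :
    HasDerivAt (fun a => ∫ t in Ioi a, f t) (-f x) x := by
  have h : (fun a => ∫ t in Ioi a, f t) = fun a => (∫ t in Ioi 0, f t) - ∫ t in 0..a, f t := by
    funext a
    rw [← intervalIntegral.integral_Ioi_sub_Ioi' hf.integrableOn hf.integrableOn, sub_sub_cancel]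
  rw [h]
  exact (intervalIntegral.integral_hasDerivAt_right hf.intervalIntegrable
    (hc.stronglyMeasurableAtFilter _ _) hc.continuousAt).const_sub _

theorem integrable_exp_neg_sq : Integrable fun u : ℝ => exp (-u ^ 2) := by
  simpa using integrable_exp_neg_mul_sq one_pos

theorem hasDerivAt_erfc (x : ℝ) : HasDerivAt erfc (-(2 / √π) * exp (-x ^ 2)) x := by
  rw [neg_mul, ← mul_neg]
  exact (hasDerivAt_integral_Ioi integrable_exp_neg_sq (by fun_prop) x).const_mul (2 / √π)

@[fun_prop]
theorem continuous_erfc : Continuous erfc :=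
  continuous_iff_continuousAt.2 fun x => (hasDerivAt_erfc x).continuousAt

theorem erfc_zero : erfc 0 = 1 := by
  have hπ : 0 < √π := sqrt_pos.2 pi_pos
  have := integral_gaussian_Ioi 1
  simp only [neg_mul, one_mul, div_one] at this
  rw [erfc, this]
  field_simp

theorem erfc_nonneg (x : ℝ) : 0 ≤ erfc x :=
  mul_nonneg (by positivity) (setIntegral_nonneg measurableSet_Ioi fun _ _ => (exp_pos _).le)

theorem erfc_le_two (x : ℝ) : erfc x ≤ 2 := by
  have hπ : 0 < √π := sqrt_pos.2 pi_pos
  have h : ∫ u in Ioi x, exp (-u ^ 2) ≤ √π := by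
    have := integral_gaussian 1
    simp only [neg_mul, one_mul, div_one] at this
    exact this ▸ setIntegral_le_integral integrable_exp_neg_sq (.of_forall fun _ => (exp_pos _).le)
  calc erfc x ≤ 2 / √π * √π := mul_le_mul_of_nonneg_left h (by positivity)
    _ = 2 := by field_simp

theorem one_le_erfc_of_nonpos {x : ℝ} (hx : x ≤ 0) : 1 ≤ erfc x := by
  rw [← erfc_zero]
  refine mul_le_mul_of_nonneg_left (setIntegral_mono_set integrable_exp_neg_sq.integrableOn
    (.of_forall fun _ => (exp_pos _).le) (.of_forall (Ioi_subset_Ioi hx))) (by positivity)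

theorem exp_neg_mul_div_sqrt_eq_rpow (r : ℝ) {y : ℝ} (hy : 0 < y) :
    exp (-r * y) / √y = y ^ ((1 / 2 : ℝ) - 1) * exp (-(r * y)) := by
  rw [rpow_sub hy, rpow_one, ← sqrt_eq_rpow, neg_mul]
  field_simp
  rw [sq_sqrt hy.le]

theorem integrableOn_exp_neg_mul_div_sqrt {r : ℝ} (hr : 0 < r) :
    IntegrableOn (fun y => exp (-r * y) / √y) (Ioi 0) := by
  refine (integrableOn_rpow_mul_exp_neg_mul_rpow (s := (1 / 2 : ℝ) - 1) (by norm_num) one_pos hr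
    ).congr_fun (fun y hy => ?_) measurableSet_Ioi
  dsimp only
  rw [exp_neg_mul_div_sqrt_eq_rpow r hy, rpow_one, neg_mul]

theorem integral_exp_neg_mul_div_sqrt {r : ℝ} (hr : 0 < r) :
    ∫ y in Ioi 0, exp (-r * y) / √y = √π / √r := by
  rw [setIntegral_congr_fun measurableSet_Ioi fun y hy => exp_neg_mul_div_sqrt_eq_rpow r hy,
    integral_rpow_mul_exp_neg_mul_Ioi one_half_pos hr, Gamma_one_half_eq, ← sqrt_eq_rpow,
    one_div, sqrt_inv]
  ring

section LaplaceErfc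

variable {s : ℝ} (c : ℝ)

theorem integrableOn_exp_neg_mul_mul_erfc (hs : 0 < s) :
    IntegrableOn (fun y => exp (-s * y) * erfc (c * √y)) (Ioi 0) := by
  refine Integrable.mono' ((exp_neg_integrableOn_Ioi 0 hs).const_mul 2)
    (by fun_prop : Continuous _).aestronglyMeasurable (.of_forall fun y => ?_)
  rw [norm_of_nonneg (mul_nonneg (exp_pos _).le (erfc_nonneg _)), mul_comm 2]
  exact mul_le_mul_of_nonneg_left (erfc_le_two _) (exp_pos _).le

theorem tendsto_exp_neg_mul_mul_erfc (hs : 0 < s) :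
    Tendsto (fun y => exp (-s * y) * erfc (c * √y)) atTop (𝓝 0) := by
  have hexp : Tendsto (fun y => 2 * exp (-s * y)) atTop (𝓝 0) := by
    simpa using (tendsto_exp_neg_atTop_nhds_zero.comp (tendsto_id.const_mul_atTop hs)).const_mul 2
  refine squeeze_zero (fun y => mul_nonneg (exp_pos _).le (erfc_nonneg _)) (fun y => ?_) hexp
  rw [mul_comm 2]
  exact mul_le_mul_of_nonneg_left (erfc_le_two _) (exp_pos _).le

theorem hasDerivAt_exp_neg_mul_mul_erfc (hs : s ≠ 0) {y : ℝ} (hy : 0 < y) :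
    HasDerivAt (fun y => -(exp (-s * y) * erfc (c * √y)) / s)
      (exp (-s * y) * erfc (c * √y) + c / (s * √π) * (exp (-(s + c ^ 2) * y) / √y)) y := by
  have hsqrt : HasDerivAt (fun y => c * √y) (c * (1 / (2 * √y))) y :=
    (hasDerivAt_sqrt hy.ne').const_mul c
  have hexp : HasDerivAt (fun y => exp (-s * y)) (exp (-s * y) * -s) y :=
    ((hasDerivAt_id y).const_mul (-s)).exp.congr_deriv (by simp)
  refine ((hexp.mul ((hasDerivAt_erfc _).comp y hsqrt)).neg.div_const s).congr_deriv ?_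
  have hexp_add : exp (-(s + c ^ 2) * y) = exp (-s * y) * exp (-(c * √y) ^ 2) := by
    rw [← exp_add, mul_pow, sq_sqrt hy.le]
    ring_nf
  have hsqrt_pos := sqrt_pos.2 hy
  have hπ := sqrt_pos.2 pi_pos
  rw [hexp_add, Function.comp_apply]
  field_simp
  ring

theorem integral_exp_neg_mul_mul_erfc (hs : 0 < s) :
    ∫ y in Ioi 0, exp (-s * y) * erfc (c * √y) = (1 - c / √(s + c ^ 2)) / s := by
  have hsc : 0 < s + c ^ 2 := by positivity
  have hFTC := integral_Ioi_of_hasDerivAt_of_tendsto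
    (by fun_prop : Continuous fun y => -(exp (-s * y) * erfc (c * √y)) / s).continuousWithinAt
    (fun y hy => hasDerivAt_exp_neg_mul_mul_erfc c hs.ne' hy)
    ((integrableOn_exp_neg_mul_mul_erfc c hs).add
      ((integrableOn_exp_neg_mul_div_sqrt hsc).const_mul _))
    (by simpa using (tendsto_exp_neg_mul_mul_erfc c hs).neg.div_const s)
  rw [integral_add (integrableOn_exp_neg_mul_mul_erfc c hs)
    ((integrableOn_exp_neg_mul_div_sqrt hsc).const_mul _), integral_const_mul,
    integral_exp_neg_mul_div_sqrt hsc] at hFTC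
  simp only [mul_zero, exp_zero, sqrt_zero, erfc_zero] at hFTC
  have hπ := sqrt_pos.2 pi_pos
  field_simp at hFTC ⊢
  linear_combination hFTC

end LaplaceErfc

section Resolvent

variable {μ σ α β : ℝ}

theorem exp_neg_mul_mul_uResolvent (hσ : 0 < σ) {y : ℝ} (hy : 0 < y) :
    exp (-β * y) * uResolvent μ σ α y =
      σ / √(2 * π) * (exp (-(β + μ ^ 2 / (2 * σ ^ 2)) * y) / √y) +
        (μ - α * σ ^ 2) / 2 * (exp (-(β + α * μ - α ^ 2 * σ ^ 2 / 2) * y) *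
          erfc ((α * σ ^ 2 - μ) / √(2 * σ ^ 2) * √y)) := by
  have hgauss : exp (-β * y) * exp (-(√y * μ / σ) ^ 2 / 2)
      = exp (-(β + μ ^ 2 / (2 * σ ^ 2)) * y) := by
    rw [← exp_add, div_pow, mul_pow, sq_sqrt hy.le]
    field_simp
    ring_nf
  have hdrift : exp (-β * y) * exp (α * y * (α * σ ^ 2 / 2 - μ))
      = exp (-(β + α * μ - α ^ 2 * σ ^ 2 / 2) * y) := by
    rw [← exp_add]
    ring_nf
  have harg : √y * (α * σ ^ 2 - μ) / √(2 * σ ^ 2) = (α * σ ^ 2 - μ) / √(2 * σ ^ 2) * √y := by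
    ring
  rw [uResolvent, stdNormal, harg, ← hgauss, ← hdrift]
  ring

theorem integral_exp_neg_mul_mul_uResolvent (hμ : 0 < μ) (hσ : 0 < σ) (hβ : 0 ≤ β)
    (hs : 0 < β + α * μ - α ^ 2 * σ ^ 2 / 2) :
    ∫ y in Ioi 0, exp (-β * y) * uResolvent μ σ α y
      = σ ^ 2 / (α * σ ^ 2 + √(2 * β * σ ^ 2 + μ ^ 2) - μ) := by
  set s := β + α * μ - α ^ 2 * σ ^ 2 / 2
  set c := (α * σ ^ 2 - μ) / √(2 * σ ^ 2)
  set Δ := √(2 * β * σ ^ 2 + μ ^ 2) with hΔ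
  have hq : √(2 * σ ^ 2) = √2 * σ := by rw [sqrt_mul zero_le_two, sqrt_sq hσ.le]
  have ht : β + μ ^ 2 / (2 * σ ^ 2) = (2 * β * σ ^ 2 + μ ^ 2) / (2 * σ ^ 2) := by
    field_simp
  have hsc : s + c ^ 2 = (2 * β * σ ^ 2 + μ ^ 2) / (2 * σ ^ 2) := by
    rw [div_pow, sq_sqrt (by positivity)]
    field_simp
    ring
  have htpos : 0 < β + μ ^ 2 / (2 * σ ^ 2) := by positivity
  rw [setIntegral_congr_fun measurableSet_Ioi fun y hy => exp_neg_mul_mul_uResolvent hσ hy,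
    integral_add ((integrableOn_exp_neg_mul_div_sqrt htpos).const_mul _)
      ((integrableOn_exp_neg_mul_mul_erfc c hs).const_mul _),
    integral_const_mul, integral_const_mul, integral_exp_neg_mul_div_sqrt htpos,
    integral_exp_neg_mul_mul_erfc c hs, hsc, ht, sqrt_div' _ (by positivity : (0:ℝ) ≤ 2 * σ ^ 2),
    ← hΔ, hq, sqrt_mul zero_le_two]
  have hΔsq : Δ ^ 2 = 2 * β * σ ^ 2 + μ ^ 2 := sq_sqrt (by positivity)
  have hΔpos : 0 < Δ := sqrt_pos.2 (by positivity)
  have hfactor : (α * σ ^ 2 + Δ - μ) * (Δ + μ - α * σ ^ 2) = 2 * σ ^ 2 * s := by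
    linear_combination hΔsq
  have hden : α * σ ^ 2 + Δ - μ ≠ 0 :=
    left_ne_zero_of_mul (hfactor ▸ (by positivity : 0 < 2 * σ ^ 2 * s).ne')
  have h2 := sqrt_pos.2 (zero_lt_two' ℝ)
  have hπ := sqrt_pos.2 pi_pos
  simp only [c]
  rw [hq, eq_div_iff hden]
  field_simp
  linear_combination (μ - α * σ ^ 2) * hfactor

theorem not_integrableOn_uResolvent_zero (hμ : 0 < μ) (hσ : 0 < σ) :
    ¬IntegrableOn (uResolvent μ σ 0) (Ioi 0) := by
  intro hint
  have hconst : IntegrableOn (fun _ => μ / 2) (Ioi (0 : ℝ)) := by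
    refine hint.mono' aestronglyMeasurable_const
      ((ae_restrict_iff' measurableSet_Ioi).2 (.of_forall fun y _ => ?_))
    have hdiffusion : 0 ≤ σ / √y * stdNormal (√y * μ / σ) := by unfold stdNormal; positivity
    have herfc : 1 ≤ erfc (√y * (0 * σ ^ 2 - μ) / √(2 * σ ^ 2)) :=
      one_le_erfc_of_nonpos (div_nonpos_of_nonpos_of_nonneg
        (mul_nonpos_of_nonneg_of_nonpos (sqrt_nonneg y) (by linarith)) (sqrt_nonneg _))
    rw [norm_of_nonneg (by positivity), uResolvent]
    simp only [zero_mul, exp_zero, sub_zero, mul_one] at herfc ⊢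
    nlinarith
  simp [integrableOn_const_iff, hμ.ne'] at hconst

end Resolvent

theorem laplace_of_resolvent_density
    (μ σ α : ℝ) (hμ : 0 < μ) (hσ : 0 < σ) (hα : 0 ≤ α) (hα2 : α < 2 * μ / σ ^ 2) :
    ∀ β : ℝ, 0 ≤ β →
      ∫ y in Set.Ioi (0 : ℝ), Real.exp (-β * y) * uResolvent μ σ α y
        = σ ^ 2 / (α * σ ^ 2 + Real.sqrt (2 * β * σ ^ 2 + μ ^ 2) - μ) := by
  intro β hβ
  by_cases hdeg : α = 0 ∧ β = 0
  · obtain ⟨rfl, rfl⟩ := hdeg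
    simp [integral_undef (not_integrableOn_uResolvent_zero hμ hσ), sqrt_sq hμ.le]
  refine integral_exp_neg_mul_mul_uResolvent hμ hσ hβ ?_
  have hdrift : 0 < μ - α * σ ^ 2 / 2 := by
    have := (lt_div_iff₀ (by positivity)).1 hα2
    linarith
  rcases hα.eq_or_lt with rfl | hαpos
  · have hβ0 : β ≠ 0 := fun h => hdeg ⟨rfl, h⟩
    simpa using hβ.lt_of_ne' hβ0
  · nlinarith
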